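/- arXiv:1611.03553 — 5 statements merged into one kernel-verified Lean document; each statement's English description precedes it below -/
import Mathlib

section
/- Let R be a commutative semiring and F a decomposable sum-product expression over R whose scope is all of ι. Define Z(F) ∈ R recursively: Z of a constant leaf c is c; Z of a leaf (i, φ) is ∑_{t ∈ X i} φ t; Z of a Product node is the product of the Z-values of its children; Z of a Sum node v with children G₁, …, G_m is ∑_k (∏_{i ∈ scope(v) \ scope(G_k)} |X i|) • Z(G_k), where • denotes the natural-number scalar action on R. Then ∑_{x : ∀ i, X i} eval F x = Z(F). -/
/-!
Sum `F` only over the variables of its own scope, the other variables being frozen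
(`marginalSum`); for decomposable `F` this partial sum is `Z F`, by induction on `F`. The
children of a Product node depend on disjoint sets of variables, so the partial sum of the
product factors; a Sum node is linear, and a child summed over the whole scope of the node
picks up a factor `|X i|` for each variable `i` it does not mention. Full sums over `ι` would
not do: the factors `|X i|` need not be cancellable in `R`, so full sums do not determine the
partial sums that a Product node needs.
-/

open Finset

/-- A sum-product expression (SPF) over a commutative semiring `R` in variables
indexed by `ι` with domains `X i`: a leaf is a constant `c : R` or a pair of an
index `i` and a univariate function `φ : X i → R`; internal nodes are Sum or
Product nodes with a finite list of children. -/
inductive SPF (R : Type) (ι : Type) (X : ι → Type) where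
  | const : R → SPF R ι X
  | leaf : (i : ι) → (X i → R) → SPF R ι X
  | sum : List (SPF R ι X) → SPF R ι X
  | prod : List (SPF R ι X) → SPF R ι X

namespace SPF

variable {R : Type} [CommSemiring R] {ι : Type} [DecidableEq ι] {X : ι → Type}

/-- Evaluation of an SPF at a full assignment. -/
def eval : SPF R ι X → ((i : ι) → X i) → R
  | .const c, _ => c
  | .leaf i φ, x => φ (x i)
  | .sum l, x => (l.attach.map fun c => c.1.eval x).sum
  | .prod l, x => (l.attach.map fun c => c.1.eval x).prod
decreasing_by all_goals (simp_wf; have := List.sizeOf_lt_of_mem c.2; omega)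

/-- The scope of an SPF: the finite set of variable indices appearing in its leaves. -/
def scope : SPF R ι X → Finset ι
  | .const _ => ∅
  | .leaf i _ => {i}
  | .sum l => (l.attach.map fun c => c.1.scope).foldr (· ∪ ·) ∅
  | .prod l => (l.attach.map fun c => c.1.scope).foldr (· ∪ ·) ∅
decreasing_by all_goals (simp_wf; have := List.sizeOf_lt_of_mem c.2; omega)

/-- An SPF is decomposable iff the children of every Product node have
pairwise disjoint scopes. -/
inductive Decomposable : SPF R ι X → Prop
  | const (c : R) : Decomposable (.const c)
  | leaf (i : ι) (φ : X i → R) : Decomposable (.leaf i φ)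
  | sum {l : List (SPF R ι X)} :
      (∀ G ∈ l, Decomposable G) → Decomposable (.sum l)
  | prod {l : List (SPF R ι X)} :
      (∀ G ∈ l, Decomposable G) →
      l.Pairwise (fun G H => Disjoint G.scope H.scope) →
      Decomposable (.prod l)

/-- The recursive bottom-up summation `Z` of an SPF: constants map to themselves,
a leaf `(i, φ)` to `∑ t : X i, φ t`, a Product node to the product of its
children's values, and a Sum node to the sum of its children's values, each
scaled (by natural-number scalar action) by the cardinality of the domain of the
variables in the node's scope missing from that child's scope. -/
def Z [∀ i, Fintype (X i)] : SPF R ι X → R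
  | .const c => c
  | .leaf _ φ => ∑ t, φ t
  | .prod l => (l.attach.map fun c => c.1.Z).prod
  | .sum l => (l.attach.map fun c =>
      (∏ i ∈ (SPF.sum l).scope \ c.1.scope, Fintype.card (X i)) • c.1.Z).sum
decreasing_by all_goals (simp_wf; have := List.sizeOf_lt_of_mem c.2; omega)

end SPF

open Function

section MarginalSum

variable {ι : Type*} [DecidableEq ι] {X : ι → Type*} [∀ i, Fintype (X i)]

def marginalSum {M : Type*} [AddCommMonoid M] (s : Finset ι) (f : (Π i, X i) → M)
    (x : Π i, X i) : M :=
  ∑ y : Π i : s, X i, f (updateFinset x s y)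

variable {M : Type*} [AddCommMonoid M]

@[simp]
theorem marginalSum_empty (f : (Π i, X i) → M) (x : Π i, X i) : marginalSum ∅ f x = f x := by
  simp [marginalSum]

theorem marginalSum_singleton (i : ι) (φ : X i → M) (x : Π i, X i) :
    marginalSum {i} (fun y => φ (y i)) x = ∑ t, φ t := by
  simp only [marginalSum, updateFinset_singleton, update_self]
  exact Fintype.sum_equiv (Equiv.piUnique _) _ _ fun y => rfl

theorem marginalSum_univ [Fintype ι] (f : (Π i, X i) → M) (x : Π i, X i) :
    marginalSum univ f x = ∑ y, f y :=
  Fintype.sum_equiv (.piCongrLeft' _ (.subtypeUnivEquiv mem_univ)) _ _ fun y => by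
    rw [updateFinset_univ]; rfl

theorem marginalSum_list_sum {α : Type*} (s : Finset ι) (l : List α)
    (f : α → (Π i, X i) → M) (x : Π i, X i) :
    marginalSum s (fun y => (l.map (f · y)).sum) x =
      (l.map fun a => marginalSum s (f a) x).sum := by
  induction l with
  | nil => simp [marginalSum]
  | cons a l ih =>
    simp only [marginalSum] at ih ⊢
    simp only [List.map_cons, List.sum_cons, sum_add_distrib, ih]

theorem marginalSum_union_mul {R : Type*} [NonUnitalNonAssocSemiring R] {s t : Finset ι}
    (hst : Disjoint s t) {f g : (Π i, X i) → R} (hf : DependsOn f s) (hg : DependsOn g t)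
    (x : Π i, X i) :
    marginalSum (s ∪ t) (f * g) x = marginalSum s f x * marginalSum t g x := by
  rw [marginalSum, marginalSum, marginalSum, sum_mul_sum, ← Fintype.sum_prod_type']
  refine (Fintype.sum_equiv (Equiv.piFinsetUnion X hst) _ _ fun ⟨y, z⟩ => ?_).symm
  rw [← updateFinset_updateFinset hst, Pi.mul_apply]
  congr 1
  · refine hf fun i hi => ?_
    simp [updateFinset_def, disjoint_left.mp hst hi]
  · refine hg fun i hi => ?_
    simp [updateFinset_def, mem_coe.mp hi]

theorem marginalSum_one {R : Type*} [NonAssocSemiring R] (s : Finset ι) (x : Π i, X i) :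
    marginalSum s (1 : (Π i, X i) → R) x = (∏ i ∈ s, Fintype.card (X i) : ℕ) := by
  simp only [marginalSum, Pi.one_apply, sum_const, card_univ, Fintype.card_pi, nsmul_one]
  rw [prod_coe_sort s (Fintype.card <| X ·)]

theorem marginalSum_of_subset {R : Type*} [NonAssocSemiring R] {s t : Finset ι} (hst : s ⊆ t)
    {f : (Π i, X i) → R} (hf : DependsOn f s) (x : Π i, X i) :
    marginalSum t f x = (∏ i ∈ t \ s, Fintype.card (X i)) • marginalSum s f x := by
  calc marginalSum t f x = marginalSum (s ∪ t \ s) (f * 1) x := by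
        rw [union_sdiff_of_subset hst, mul_one]
    _ = marginalSum s f x * marginalSum (t \ s) 1 x :=
        marginalSum_union_mul disjoint_sdiff hf (fun _ _ _ => rfl) x
    _ = (∏ i ∈ t \ s, Fintype.card (X i)) • marginalSum s f x := by
        rw [marginalSum_one, nsmul_eq_mul, Nat.cast_comm]

end MarginalSum

namespace SPF

variable {R ι : Type} {X : ι → Type}

theorem induction {motive : SPF R ι X → Prop}
    (const : ∀ c, motive (.const c)) (leaf : ∀ i φ, motive (.leaf i φ))
    (sum : ∀ l, (∀ G ∈ l, motive G) → motive (.sum l))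
    (prod : ∀ l, (∀ G ∈ l, motive G) → motive (.prod l)) : ∀ F, motive F
  | .const c => const c
  | .leaf i φ => leaf i φ
  | .sum l => sum l fun G _ => induction const leaf sum prod G
  | .prod l => prod l fun G _ => induction const leaf sum prod G
decreasing_by all_goals (simp_wf; have := List.sizeOf_lt_of_mem ‹G ∈ l›; omega)

section Eval

variable [CommSemiring R]

theorem eval_leaf (i : ι) (φ : X i → R) : (leaf i φ).eval = fun x => φ (x i) := by
  funext x; simp [eval]

theorem eval_sum (l : List (SPF R ι X)) :
    (SPF.sum l).eval = fun x => (l.map (·.eval x)).sum := by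
  funext x; simp [eval]

theorem eval_prod (l : List (SPF R ι X)) :
    (SPF.prod l).eval = fun x => (l.map (·.eval x)).prod := by
  funext x; simp [eval]

theorem eval_prod_cons (G : SPF R ι X) (l : List (SPF R ι X)) :
    (SPF.prod (G :: l)).eval = G.eval * (SPF.prod l).eval := by
  simp [eval_prod, Pi.mul_def]

end Eval

section Scope

variable [DecidableEq ι]

theorem scope_prod_cons (G : SPF R ι X) (l : List (SPF R ι X)) :
    (SPF.prod (G :: l)).scope = G.scope ∪ (SPF.prod l).scope := by
  simp [scope]

theorem mem_scope_sum {l : List (SPF R ι X)} {i : ι} :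
    i ∈ (SPF.sum l).scope ↔ ∃ G ∈ l, i ∈ G.scope := by
  induction l with
  | nil => simp [scope]
  | cons G l ih => simp_all [scope]

theorem mem_scope_prod {l : List (SPF R ι X)} {i : ι} :
    i ∈ (SPF.prod l).scope ↔ ∃ G ∈ l, i ∈ G.scope := by
  induction l with
  | nil => simp [scope]
  | cons G l ih => simp_all [scope]

end Scope

variable [CommSemiring R] [DecidableEq ι]

theorem dependsOn_eval (F : SPF R ι X) : DependsOn F.eval F.scope := by
  induction F using SPF.induction with
  | const c => exact fun _ _ _ => by simp [eval]
  | leaf i φ => rw [eval_leaf]; exact fun x y h => congrArg φ (h i (by simp [scope]))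
  | sum l ih =>
    rw [eval_sum]
    exact fun x y h => congrArg List.sum <| List.map_congr_left fun G hG =>
      ih G hG fun i hi => h i (mem_scope_sum.2 ⟨G, hG, hi⟩)
  | prod l ih =>
    rw [eval_prod]
    exact fun x y h => congrArg List.prod <| List.map_congr_left fun G hG =>
      ih G hG fun i hi => h i (mem_scope_prod.2 ⟨G, hG, hi⟩)

variable [∀ i, Fintype (X i)]

theorem Z_sum (l : List (SPF R ι X)) :
    (SPF.sum l).Z = (l.map fun G =>
      (∏ i ∈ (SPF.sum l).scope \ G.scope, Fintype.card (X i)) • G.Z).sum := by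
  rw [Z]
  exact congrArg List.sum (List.attach_map_val (f := fun G : SPF R ι X =>
    (∏ i ∈ (SPF.sum l).scope \ G.scope, Fintype.card (X i)) • G.Z))

theorem Z_prod_cons (G : SPF R ι X) (l : List (SPF R ι X)) :
    (SPF.prod (G :: l)).Z = G.Z * (SPF.prod l).Z := by
  simp [Z]

theorem marginalSum_scope_eval_prod {l : List (SPF R ι X)}
    (hl : l.Pairwise fun G H => Disjoint G.scope H.scope)
    (ih : ∀ G ∈ l, ∀ x, marginalSum G.scope G.eval x = G.Z) (x : Π i, X i) :
    marginalSum (SPF.prod l).scope (SPF.prod l).eval x = (SPF.prod l).Z := by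
  induction l with
  | nil => simp [scope, eval, Z]
  | cons G l ihl =>
    obtain ⟨hG, hl⟩ := List.pairwise_cons.mp hl
    have hdisj : Disjoint G.scope (SPF.prod l).scope := disjoint_right.2 fun i hi hiG => by
      obtain ⟨H, hH, hiH⟩ := mem_scope_prod.1 hi
      exact disjoint_left.mp (hG H hH) hiG hiH
    rw [scope_prod_cons, eval_prod_cons, Z_prod_cons,
      marginalSum_union_mul hdisj (dependsOn_eval G) (dependsOn_eval _),
      ih G List.mem_cons_self x, ihl hl fun H hH => ih H (List.mem_cons_of_mem _ hH)]

theorem Decomposable.marginalSum_scope_eval {F : SPF R ι X} (hF : F.Decomposable)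
    (x : Π i, X i) : marginalSum F.scope F.eval x = F.Z := by
  induction hF generalizing x with
  | const c => simp [scope, eval, Z]
  | leaf i φ => simp only [scope, eval_leaf, Z, marginalSum_singleton]
  | sum _ ih =>
    rw [eval_sum, marginalSum_list_sum, Z_sum]
    refine congrArg List.sum <| List.map_congr_left fun G hG => ?_
    rw [marginalSum_of_subset (fun i hi => mem_scope_sum.2 ⟨G, hG, hi⟩) (dependsOn_eval G),
      ih G hG]
  | prod _ hpw ih => exact marginalSum_scope_eval_prod hpw ih x

end SPF

/-- **The sum-product theorem** (Theorem 1): the sum of a decomposable SPF with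
full scope over all assignments equals its linear-time bottom-up summation `Z`. -/
theorem sum_product_theorem {R : Type} [CommSemiring R] {ι : Type} [Fintype ι]
    [DecidableEq ι] {X : ι → Type} [∀ i, Fintype (X i)] [∀ i, Nonempty (X i)]
    (F : SPF R ι X) (hdec : F.Decomposable) (hscope : F.scope = Finset.univ) :
    ∑ x : (i : ι) → X i, F.eval x = F.Z := by
  have h := hdec.marginalSum_scope_eval (Classical.arbitrary _)
  rwa [hscope, marginalSum_univ] at h
end

section
/- Let R be a commutative semiring, ι a finite index set with finite nonempty domains X i, and T a finite rooted tree with vertex set V and cluster map C : V → Finset ι satisfying: (i) ⋃_{v ∈ V} C v = ι, and (ii) the running intersection property: for all u, w ∈ V and every v on the unique path between u and w in T, C u ∩ C w ⊆ C v. Let ψ_v : (∀ i ∈ C v, X i) → R for each v ∈ V. Define, bottom-up, for each non-root vertex v with parent p and separator S_v = C v ∩ C p, the message m_v : (∀ i ∈ S_v, X i) → R by m_v(s) = ∑_{c : ∀ i ∈ C v, X i, c compatible with s} ψ_v(c) * ∏_{children u of v} m_u(c restricted to S_u), and let Z = ∑_{c : ∀ i ∈ C r, X i} ψ_r(c) *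 ∏_{children u of r} m_u(c restricted to S_u), where r is the root. Then Z = ∑_{x : ∀ i, X i} ∏_{v ∈ V} ψ_v (x restricted to C v). -/
/-!
Write `sumOut s f x` for the sum of `f` over the assignments that agree with `x` outside `s`.
By induction on the size of the subtree below a non-root vertex `v`, its message at the
restriction of `x` is `sumOut` over the variables of the subtree that are not in `C (par v)`,
applied to the product of all cluster functions of the subtree. The inductive step is
distributivity: by the running intersection property, the variables eliminated below one child
occur neither in `C v` nor in the subtree of any other child, and a variable of the subtree of a
child that occurs in `C (par v)` already occurs in `C v`. At the root, `C r` together with the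
variables eliminated below its children is everything.
-/

open Finset

section JunctionTree

variable {V : Type} [Fintype V] [DecidableEq V]
variable {ι : Type} [Fintype ι] [DecidableEq ι]
variable {X : ι → Type} [∀ i, Fintype (X i)] [∀ i, DecidableEq (X i)] [∀ i, Nonempty (X i)]
variable {R : Type} [CommSemiring R]

/-- The undirected tree on the vertex set `V` determined by a parent map. -/
def treeGraph (par : V → V) : SimpleGraph V where
  Adj u w := u ≠ w ∧ (par u = w ∨ par w = u)
  symm := by
    constructor
    intro u w h
    exact ⟨h.1.symm, h.2.symm⟩
  loopless := by
    constructor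
    intro u h
    exact h.1 rfl

/-- The children of a vertex `v` in the rooted tree with root `r` and parent map `par`. -/
def children (par : V → V) (r v : V) : Finset V :=
  Finset.univ.filter fun u => par u = v ∧ u ≠ r

/-- The bottom-up message `m_v` sent by a non-root vertex `v` to its parent: a
function of an assignment `s` to the separator `S_v = C v ∩ C (par v)`, equal to
the sum, over assignments `c` to the cluster `C v` compatible with `s`, of
`ψ v c` times the product of the children's messages at the restrictions of `c`
to their separators.  The auxiliary fuel argument (instantiated with
`Fintype.card V`, a bound on the height of the tree) drives the recursion. -/
def msg (par : V → V) (r : V) (C : V → Finset ι)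
    (ψ : (v : V) → ((i : ↥(C v)) → X i.1) → R) :
    ℕ → (v : V) → ((i : ↥(C v ∩ C (par v))) → X i.1) → R
  | 0, _, _ => 0
  | fuel + 1, v, s =>
    ∑ c : (i : ↥(C v)) → X i.1,
      if (∀ i : ↥(C v ∩ C (par v)), c ⟨i.1, Finset.mem_of_mem_inter_left i.2⟩ = s i) then
        ψ v c *
          ∏ u ∈ (children par r v).attach,
            msg par r C ψ fuel u.1 (fun i =>
              c ⟨i.1, by
                have hu : par u.1 = v := (Finset.mem_filter.mp u.2).2.1
                exact (congrArg C hu) ▸ (Finset.mem_of_mem_inter_right i.2)⟩)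
      else 0

/-- The quantity `Z` computed at the root `r`: the sum over assignments `c` to
the root cluster of `ψ r c` times the product of the root's children's messages. -/
def rootSum (par : V → V) (r : V) (C : V → Finset ι)
    (ψ : (v : V) → ((i : ↥(C v)) → X i.1) → R) : R :=
  ∑ c : (i : ↥(C r)) → X i.1,
    ψ r c *
      ∏ u ∈ (children par r r).attach,
        msg par r C ψ (Fintype.card V) u.1 (fun i =>
          c ⟨i.1, by
            have hu : par u.1 = r := (Finset.mem_filter.mp u.2).2.1
            exact (congrArg C hu) ▸ (Finset.mem_of_mem_inter_right i.2)⟩)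

end JunctionTree

namespace JunctionTree

open Function

section SumOut

variable {ι : Type*} [DecidableEq ι] {X : ι → Type*} [∀ i, Fintype (X i)]
  {R : Type*} [CommSemiring R]

def sumOut (s : Finset ι) (f : (∀ i, X i) → R) (x : ∀ i, X i) : R :=
  ∑ y : (∀ i : s, X i), f (updateFinset x s y)

theorem sumOut_empty (f : (∀ i, X i) → R) (x : ∀ i, X i) : sumOut ∅ f x = f x := by
  simp [sumOut]

theorem sumOut_univ [Fintype ι] (f : (∀ i, X i) → R) (x : ∀ i, X i) :
    sumOut univ f x = ∑ y, f y := by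
  refine Fintype.sum_bijective (fun y i => y ⟨i, mem_univ i⟩) ⟨fun y z h => ?_, fun y => ?_⟩ _ _
    fun y => by rw [updateFinset_univ]
  · funext i
    exact congrFun h i
  · exact ⟨fun i => y i, rfl⟩

theorem sum_eq_sumOut (s : Finset ι) (g : (∀ i : s, X i) → R) (x : ∀ i, X i) :
    ∑ c, g c = sumOut s (fun y => g (s.restrict y)) x := by
  simp only [sumOut, restrict_updateFinset]

theorem sum_ite_restrict_eq_sumOut [∀ i, DecidableEq (X i)] (A B : Finset ι)
    (g : (∀ i : A, X i) → R) (x : ∀ i, X i) :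
    ∑ c : (∀ i : A, X i),
        (if ∀ i : ↥(A ∩ B), c ⟨i.1, mem_of_mem_inter_left i.2⟩ = (A ∩ B).restrict x i then g c
          else 0) =
      sumOut (A \ B) (fun y => g (A.restrict y)) x := by
  rw [← sum_filter, sumOut]
  symm
  refine sum_nbij' (fun z => A.restrict (updateFinset x (A \ B) z))
    (fun c i => c ⟨i.1, (mem_sdiff.1 i.2).1⟩) (fun z _ => ?_) (fun _ _ => mem_univ _)
    (fun z _ => ?_) (fun c hc => ?_) (fun _ _ => rfl)
  · simp only [mem_filter, mem_univ, true_and]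
    intro i
    simp [updateFinset, (mem_inter.1 i.2).2]
  · funext i
    simp [updateFinset, i.2]
  · funext i
    have hc := (mem_filter.1 hc).2
    by_cases hi : i.1 ∈ B
    · simpa [updateFinset, hi] using (hc ⟨i.1, mem_inter.2 ⟨i.2, hi⟩⟩).symm
    · simp [updateFinset, hi]

theorem dependsOn_sumOut {f : (∀ i, X i) → R} {A : Set ι} (hf : DependsOn f A)
    (s : Finset ι) : DependsOn (sumOut s f) (A \ s) :=
  fun _ _ h => sum_congr rfl fun y _ => hf.updateFinset y h

theorem sumOut_union {s t : Finset ι} (hst : Disjoint s t) (f : (∀ i, X i) → R)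
    (x : ∀ i, X i) : sumOut (s ∪ t) f x = sumOut s (sumOut t f) x := by
  simp only [sumOut, updateFinset_updateFinset hst, ← Fintype.sum_prod_type']
  exact ((Equiv.piFinsetUnion X hst).sum_comp fun y => f (updateFinset x (s ∪ t) y)).symm

theorem sumOut_mul_left {s : Finset ι} {g : (∀ i, X i) → R} (hg : DependsOn g (↑s)ᶜ)
    (f : (∀ i, X i) → R) (x : ∀ i, X i) :
    sumOut s (fun y => g y * f y) x = g x * sumOut s f x := by
  rw [sumOut, sumOut, mul_sum]
  refine sum_congr rfl fun y _ => congrArg (· * _) (hg fun i hi => ?_)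
  simp [updateFinset, show i ∉ s from hi]

theorem prod_sumOut {κ : Type*} [DecidableEq κ] (W : Finset κ) (s : κ → Finset ι)
    (A : κ → Set ι) (f : κ → (∀ i, X i) → R) (hf : ∀ k ∈ W, DependsOn (f k) (A k))
    (hs : ∀ k ∈ W, ↑(s k) ⊆ A k)
    (hdisj : ∀ k ∈ W, ∀ l ∈ W, k ≠ l → Disjoint (↑(s k)) (A l)) (x : ∀ i, X i) :
    ∏ k ∈ W, sumOut (s k) (f k) x = sumOut (W.biUnion s) (fun y => ∏ k ∈ W, f k y) x := by
  induction W using Finset.induction_on generalizing x with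
  | empty => simp [sumOut_empty]
  | @insert a W ha ih =>
    have hf' : ∀ k ∈ W, DependsOn (f k) (A k) := fun k hk => hf k (mem_insert_of_mem hk)
    have hs' : ∀ k ∈ W, ↑(s k) ⊆ A k := fun k hk => hs k (mem_insert_of_mem hk)
    have hdisj_a : ∀ k ∈ W, Disjoint (↑(s a)) (A k) ∧ Disjoint (↑(s k)) (A a) := fun k hk =>
      have hak : a ≠ k := fun h => ha (h ▸ hk)
      ⟨hdisj a (mem_insert_self a W) k (mem_insert_of_mem hk) hak,
        hdisj k (mem_insert_of_mem hk) a (mem_insert_self a W) hak.symm⟩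
    have hfa : DependsOn (f a) (↑(W.biUnion s))ᶜ :=
      (hf a (mem_insert_self a W)).mono fun i hi => by
        simpa using fun k hk hik => (hdisj_a k hk).2.ne_of_mem hik hi rfl
    have hW : DependsOn (sumOut (W.biUnion s) fun y => ∏ k ∈ W, f k y) (↑(s a))ᶜ := by
      refine (dependsOn_sumOut (fun y z h => prod_congr rfl fun k hk =>
        hf' k hk fun i hi => h i ?_) _).mono Set.sdiff_subset
      exact fun his => (hdisj_a k hk).1.ne_of_mem his hi rfl
    have hdisj_s : Disjoint (s a) (W.biUnion s) := (disjoint_biUnion_right _ _ _).2 fun k hk =>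
      disjoint_coe.1 ((hdisj_a k hk).1.mono_right (hs' k hk))
    rw [prod_insert ha, biUnion_insert, sumOut_union hdisj_s, ih hf' hs'
      (fun k hk l hl => hdisj k (mem_insert_of_mem hk) l (mem_insert_of_mem hl)), mul_comm,
      ← sumOut_mul_left hW]
    congr 1
    funext y
    simp only [prod_insert ha]
    rw [sumOut_mul_left hfa, mul_comm]

end SumOut

section RunningIntersection

variable {V ι : Type*} {G : SimpleGraph V} {u v w : V}

theorem _root_.SimpleGraph.Walk.IsPath.append {p : G.Walk u v} {q : G.Walk v w}
    (hp : p.IsPath) (hq : q.IsPath) (h : ∀ y ∈ p.support, y ∈ q.support → y = v) :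
    (p.append q).IsPath := by
  rw [SimpleGraph.Walk.isPath_def, SimpleGraph.Walk.support_append, List.nodup_append]
  refine ⟨hp.support_nodup, hq.support_nodup.sublist (List.tail_sublist _),
    fun a ha b hb hab => ?_⟩
  subst hab
  have hq' := hq.support_nodup
  rw [← SimpleGraph.Walk.cons_tail_support] at hq'
  exact (List.nodup_cons.1 hq').1 (h a ha (List.mem_of_mem_tail hb) ▸ hb)

variable [DecidableEq ι]

def RunningIntersection (G : SimpleGraph V) (C : V → Finset ι) : Prop :=
  ∀ u w : V, ∀ p : G.Walk u w, p.IsPath → ∀ v ∈ p.support, C u ∩ C w ⊆ C v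

theorem RunningIntersection.inter_subset {C : V → Finset ι} (hrip : RunningIntersection G C)
    {p : G.Walk u w} {q : G.Walk v w} (hp : p.IsPath) (hq : q.IsPath)
    (hpq : ∀ y ∈ p.support, y ∈ q.support → y = w) : C u ∩ C v ⊆ C w :=
  hrip u v _ (hp.append hq.reverse fun y hy hy' => hpq y hy (by simpa using hy')) w (by simp)

end RunningIntersection

section Tree

variable {V : Type} {par : V → V} {r u u' v w : V} {depth : V → ℕ}

structure IsRootedTree (par : V → V) (r : V) (depth : V → ℕ) : Prop where
  par_root : par r = r
  depth_par_lt : ∀ v, v ≠ r → depth (par v) < depth v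

theorem IsRootedTree.depth_iterate_le (ht : IsRootedTree par r depth) (k : ℕ) (w : V) :
    depth (par^[k] w) ≤ depth w := by
  induction k with
  | zero => rfl
  | succ k ih =>
    rw [iterate_succ_apply']
    by_cases h : par^[k] w = r
    · rwa [h, ht.par_root, ← h]
    · exact (ht.depth_par_lt _ h).le.trans ih

variable [Fintype V]

open Classical in
noncomputable def descendants (par : V → V) (v : V) : Finset V :=
  {w | ∃ k, par^[k] w = v}

theorem mem_descendants : w ∈ descendants par v ↔ ∃ k, par^[k] w = v := by
  simp [descendants]

theorem mem_descendants_self (v : V) : v ∈ descendants par v :=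
  mem_descendants.2 ⟨0, rfl⟩

theorem mem_descendants_of_par_mem (hw : par w ∈ descendants par v) :
    w ∈ descendants par v :=
  let ⟨k, hk⟩ := mem_descendants.1 hw
  mem_descendants.2 ⟨k + 1, hk⟩

theorem par_mem_descendants (hw : w ∈ descendants par v) (hne : w ≠ v) :
    par w ∈ descendants par v := by
  obtain ⟨_ | k, hk⟩ := mem_descendants.1 hw
  · exact absurd hk hne
  · exact mem_descendants.2 ⟨k, hk⟩

theorem descendants_subset_par (u : V) : descendants par u ⊆ descendants par (par u) :=
  fun _ hw =>
    let ⟨k, hk⟩ := mem_descendants.1 hw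
    mem_descendants.2 ⟨k + 1, by rw [iterate_succ_apply', hk]⟩

theorem mem_descendants_or_mem_descendants (hu : w ∈ descendants par u)
    (hu' : w ∈ descendants par u') : u ∈ descendants par u' ∨ u' ∈ descendants par u := by
  obtain ⟨k, rfl⟩ := mem_descendants.1 hu
  obtain ⟨j, rfl⟩ := mem_descendants.1 hu'
  rcases le_total k j with h | h
  · exact Or.inl (mem_descendants.2 ⟨j - k, by rw [← iterate_add_apply, Nat.sub_add_cancel h]⟩)
  · exact Or.inr (mem_descendants.2 ⟨k - j, by rw [← iterate_add_apply, Nat.sub_add_cancel h]⟩)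

theorem IsRootedTree.descendants_root (ht : IsRootedTree par r depth) :
    descendants par r = univ := by
  refine eq_univ_of_forall fun w => ?_
  induction h : depth w using Nat.strong_induction_on generalizing w with
  | _ n ih =>
    by_cases hw : w = r
    · subst hw
      exact mem_descendants_self _
    · exact mem_descendants_of_par_mem (ih _ (h ▸ ht.depth_par_lt w hw) _ rfl)

theorem exists_walk_of_mem_descendants (hw : w ∈ descendants par v) :
    ∃ p : (treeGraph par).Walk w v, ∀ y ∈ p.support, y ∈ descendants par v := by
  obtain ⟨k, hk⟩ := mem_descendants.1 hw
  induction k generalizing w with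
  | zero =>
    subst hk
    exact ⟨.nil, by simp [mem_descendants_self]⟩
  | succ k ih =>
    obtain ⟨p, hp⟩ := ih (mem_descendants.2 ⟨k, hk⟩) hk
    by_cases h : w = par w
    · exact h ▸ ⟨p, hp⟩
    · refine ⟨.cons ⟨h, Or.inl rfl⟩ p, fun y hy => ?_⟩
      exact (List.mem_cons.1 hy).elim (· ▸ hw) (hp y)

variable [DecidableEq V]

theorem mem_children : u ∈ children par r v ↔ par u = v ∧ u ≠ r := by
  simp [children]

theorem descendants_subset_of_mem_children (hu : u ∈ children par r v) :
    descendants par u ⊆ descendants par v :=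
  (mem_children.1 hu).1 ▸ descendants_subset_par u

theorem eq_or_exists_mem_children_of_mem_descendants (hroot : par r = r)
    (hw : w ∈ descendants par v) : w = v ∨ ∃ u ∈ children par r v, w ∈ descendants par u := by
  obtain ⟨k, hk⟩ := mem_descendants.1 hw
  induction k generalizing w with
  | zero => exact Or.inl hk
  | succ k ih =>
    rcases ih (mem_descendants.2 ⟨k, hk⟩) hk with h | ⟨u, hu, hwu⟩
    · by_cases hwr : w = r
      · subst hwr
        exact Or.inl (hroot ▸ h)
      · exact Or.inr ⟨w, mem_children.2 ⟨h, hwr⟩, mem_descendants_self w⟩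
    · exact Or.inr ⟨u, hu, mem_descendants_of_par_mem hwu⟩

theorem descendants_eq_insert_biUnion (hroot : par r = r) (v : V) :
    descendants par v = insert v ((children par r v).biUnion (descendants par)) := by
  ext w
  simp only [mem_insert, mem_biUnion]
  refine ⟨eq_or_exists_mem_children_of_mem_descendants hroot, ?_⟩
  rintro (rfl | ⟨u, hu, hw⟩)
  · exact mem_descendants_self w
  · exact descendants_subset_of_mem_children hu hw

namespace IsRootedTree

theorem notMem_descendants_of_mem_children (ht : IsRootedTree par r depth)
    (hu : u ∈ children par r v) : v ∉ descendants par u := fun hv => by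
  obtain ⟨rfl, hur⟩ := mem_children.1 hu
  obtain ⟨k, hk⟩ := mem_descendants.1 hv
  have := ht.depth_iterate_le k (par u)
  have := ht.depth_par_lt u hur
  rw [hk] at *
  omega

theorem disjoint_descendants (ht : IsRootedTree par r depth) (hu : u ∈ children par r v)
    (hu' : u' ∈ children par r v) (hne : u ≠ u') :
    Disjoint (descendants par u) (descendants par u') := by
  have sibling (a b : V) (ha : a ∈ children par r v) (hb : b ∈ children par r v)
      (hab : a ≠ b) : a ∉ descendants par b := fun h =>
    ht.notMem_descendants_of_mem_children hb ((mem_children.1 ha).1 ▸ par_mem_descendants h hab)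
  refine disjoint_left.2 fun w hw hw' => ?_
  rcases mem_descendants_or_mem_descendants hw hw' with h | h
  · exact sibling u u' hu hu' hne h
  · exact sibling u' u hu' hu hne.symm h

theorem card_descendants_lt (ht : IsRootedTree par r depth) (hu : u ∈ children par r v) :
    #(descendants par u) < #(descendants par v) :=
  card_lt_card ((ssubset_iff_of_subset (descendants_subset_of_mem_children hu)).2
    ⟨v, mem_descendants_self v, ht.notMem_descendants_of_mem_children hu⟩)

theorem exists_isPath_of_mem_descendants_child (ht : IsRootedTree par r depth)
    (hu : u ∈ children par r v) (hw : w ∈ descendants par u) :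
    ∃ p : (treeGraph par).Walk w v, p.IsPath ∧
      ∀ y ∈ p.support, y = v ∨ y ∈ descendants par u := by
  obtain ⟨q, hq⟩ := exists_walk_of_mem_descendants hw
  have huv : u ≠ v := fun h =>
    ht.notMem_descendants_of_mem_children hu (h ▸ mem_descendants_self u)
  have hadj : (treeGraph par).Adj u v := ⟨huv, Or.inl (mem_children.1 hu).1⟩
  refine ⟨(q.concat hadj).bypass, SimpleGraph.Walk.bypass_isPath _, fun y hy => ?_⟩
  have := SimpleGraph.Walk.support_bypass_subset_support _ hy
  rw [SimpleGraph.Walk.support_concat, List.mem_append, List.mem_singleton] at this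
  exact this.elim (Or.inr ∘ hq y) Or.inl

end IsRootedTree

end Tree

section Scope

variable {V : Type} [Fintype V] {par : V → V} {r u u' v : V} {depth : V → ℕ}
  {ι : Type*} {C : V → Finset ι} {X : ι → Type*} {R : Type*} [CommSemiring R]

noncomputable def subtreeProd (par : V → V) (C : V → Finset ι)
    (ψ : ∀ v, (∀ i : C v, X i) → R) (v : V) (x : ∀ i, X i) : R :=
  ∏ w ∈ descendants par v, ψ w ((C w).restrict x)

theorem IsRootedTree.subtreeProd_eq_mul_prod [DecidableEq V] (ht : IsRootedTree par r depth)
    (ψ : ∀ v, (∀ i : C v, X i) → R) (v : V) (x : ∀ i, X i) :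
    subtreeProd par C ψ v x =
      ψ v ((C v).restrict x) * ∏ u ∈ children par r v, subtreeProd par C ψ u x := by
  rw [subtreeProd, descendants_eq_insert_biUnion ht.par_root, prod_insert, prod_biUnion]
  · rfl
  · exact fun u hu u' hu' hne => ht.disjoint_descendants hu hu' hne
  · simpa using fun u hu => ht.notMem_descendants_of_mem_children hu

variable [DecidableEq ι]

noncomputable def scope (par : V → V) (C : V → Finset ι) (v : V) : Finset ι :=
  (descendants par v).biUnion C

theorem dependsOn_subtreeProd (ψ : ∀ v, (∀ i : C v, X i) → R) (v : V) :
    DependsOn (subtreeProd par C ψ v) (scope par C v) := fun _ _ h =>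
  prod_congr rfl fun w hw => congrArg (ψ w) ((C w).dependsOn_restrict fun i hi =>
    h i (mem_biUnion.2 ⟨w, hw, hi⟩))

theorem IsRootedTree.scope_root [Fintype ι] (ht : IsRootedTree par r depth)
    (hcover : univ.biUnion C = univ) : scope par C r = univ := by
  rw [scope, ht.descendants_root, hcover]

variable [DecidableEq V]

theorem scope_eq_union (hroot : par r = r) (v : V) :
    scope par C v = C v ∪ (children par r v).biUnion (scope par C) := by
  rw [scope, descendants_eq_insert_biUnion hroot, biUnion_insert, biUnion_biUnion]
  rfl

theorem union_biUnion_scope_sdiff (hroot : par r = r) (v : V) :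
    C v ∪ (children par r v).biUnion (fun u => scope par C u \ C v) = scope par C v := by
  rw [scope_eq_union hroot v]
  ext i
  by_cases h : i ∈ C v <;> simp [h]

namespace IsRootedTree

theorem scope_inter_scope_subset (ht : IsRootedTree par r depth)
    (hrip : RunningIntersection (treeGraph par) C) (hu : u ∈ children par r v)
    (hu' : u' ∈ children par r v) (hne : u ≠ u') : scope par C u ∩ scope par C u' ⊆ C v := by
  intro i hi
  obtain ⟨w, hw, hiw⟩ := mem_biUnion.1 (mem_inter.1 hi).1
  obtain ⟨w', hw', hiw'⟩ := mem_biUnion.1 (mem_inter.1 hi).2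
  obtain ⟨p, hp, hps⟩ := ht.exists_isPath_of_mem_descendants_child hu hw
  obtain ⟨q, hq, hqs⟩ := ht.exists_isPath_of_mem_descendants_child hu' hw'
  refine hrip.inter_subset hp hq (fun y hy hy' => ?_) (mem_inter.2 ⟨hiw, hiw'⟩)
  rcases hps y hy with h | h
  · exact h
  rcases hqs y hy' with h' | h'
  · exact h'
  exact absurd h' (disjoint_left.1 (ht.disjoint_descendants hu hu' hne) h)

theorem scope_inter_par_subset (ht : IsRootedTree par r depth)
    (hrip : RunningIntersection (treeGraph par) C) (hv : v ≠ r) (hu : u ∈ children par r v) :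
    scope par C u ∩ C (par v) ⊆ C v := by
  intro i hi
  obtain ⟨w, hw, hiw⟩ := mem_biUnion.1 (mem_inter.1 hi).1
  obtain ⟨p, hp, hps⟩ := ht.exists_isPath_of_mem_descendants_child hu hw
  have hpar : par v ∉ descendants par v :=
    ht.notMem_descendants_of_mem_children (mem_children.2 ⟨rfl, hv⟩)
  have hpv : par v ≠ v := fun h => by
    rw [h] at hpar
    exact hpar (mem_descendants_self v)
  have hadj : (treeGraph par).Adj (par v) v := ⟨hpv, Or.inr rfl⟩
  refine hrip.inter_subset hp hadj.isPath_toWalk (fun y hy hy' => ?_)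
    (mem_inter.2 ⟨hiw, (mem_inter.1 hi).2⟩)
  rw [hadj.support_toWalk, List.mem_pair] at hy'
  rcases hy' with rfl | rfl
  · rcases hps _ hy with h | h
    · exact absurd h hpv
    · exact absurd (descendants_subset_of_mem_children hu h) hpar
  · rfl

theorem scope_sdiff_par (ht : IsRootedTree par r depth)
    (hrip : RunningIntersection (treeGraph par) C) (hv : v ≠ r) :
    scope par C v \ C (par v) =
      (C v \ C (par v)) ∪ (children par r v).biUnion (fun u => scope par C u \ C v) := by
  rw [← union_biUnion_scope_sdiff ht.par_root v, union_sdiff_distrib,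
    sdiff_eq_self_of_disjoint (s := (children par r v).biUnion _)]
  refine disjoint_left.2 fun i hi hpi => ?_
  obtain ⟨u, hu, hiu⟩ := mem_biUnion.1 hi
  exact (mem_sdiff.1 hiu).2
    (ht.scope_inter_par_subset hrip hv hu (mem_inter.2 ⟨(mem_sdiff.1 hiu).1, hpi⟩))

theorem mul_prod_sumOut_children [∀ i, Fintype (X i)] (ht : IsRootedTree par r depth)
    (hrip : RunningIntersection (treeGraph par) C) (ψ : ∀ v, (∀ i : C v, X i) → R) (v : V)
    (x : ∀ i, X i) :
    ψ v ((C v).restrict x) *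
        ∏ u ∈ children par r v, sumOut (scope par C u \ C v) (subtreeProd par C ψ u) x =
      sumOut ((children par r v).biUnion fun u => scope par C u \ C v)
        (subtreeProd par C ψ v) x := by
  have hψ : DependsOn (fun y => ψ v ((C v).restrict y))
      (↑((children par r v).biUnion fun u => scope par C u \ C v))ᶜ :=
    fun y z h => congrArg (ψ v) ((C v).dependsOn_restrict fun i hi => h i (by simp [hi]))
  rw [prod_sumOut _ _ (fun u => ↑(scope par C u)) _ (fun u _ => dependsOn_subtreeProd ψ u)
    (fun u _ => coe_subset.2 sdiff_subset) (fun u hu u' hu' hne => ?_), ← sumOut_mul_left hψ]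
  · congr 1
    funext y
    rw [ht.subtreeProd_eq_mul_prod ψ v]
  · refine disjoint_coe.2 (disjoint_left.2 fun i hi hi' => (mem_sdiff.1 hi).2 ?_)
    exact ht.scope_inter_scope_subset hrip hu hu' hne (mem_inter.2 ⟨(mem_sdiff.1 hi).1, hi'⟩)

end IsRootedTree

end Scope

section Messages

variable {V : Type} [Fintype V] [DecidableEq V] {par : V → V} {r v : V} {depth : V → ℕ}
  {ι : Type} [DecidableEq ι] {X : ι → Type} [∀ i, Fintype (X i)] [∀ i, DecidableEq (X i)]
  {R : Type} [CommSemiring R] {C : V → Finset ι} {ψ : ∀ v, (∀ i : C v, X i) → R}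

theorem prod_attach_msg_eq {n : ℕ}
    (hmsg : ∀ u ∈ children par r v, ∀ x, msg par r C ψ n u ((C u ∩ C (par u)).restrict x) =
      sumOut (scope par C u \ C (par u)) (subtreeProd par C ψ u) x) (x : ∀ i, X i) :
    ∏ u ∈ (children par r v).attach, msg par r C ψ n u.1 ((C u.1 ∩ C (par u.1)).restrict x) =
      ∏ u ∈ children par r v, sumOut (scope par C u \ C v) (subtreeProd par C ψ u) x := by
  rw [← prod_attach (children par r v)
    (fun u => sumOut (scope par C u \ C v) (subtreeProd par C ψ u) x)]
  refine prod_congr rfl fun u _ => ?_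
  rw [hmsg u u.2, (mem_children.1 u.2).1]

namespace IsRootedTree

theorem sumOut_mul_prod_msg (ht : IsRootedTree par r depth)
    (hrip : RunningIntersection (treeGraph par) C) {n : ℕ}
    (hmsg : ∀ u ∈ children par r v, ∀ x, msg par r C ψ n u ((C u ∩ C (par u)).restrict x) =
      sumOut (scope par C u \ C (par u)) (subtreeProd par C ψ u) x)
    {D : Finset ι} (hD : D ⊆ C v) (x : ∀ i, X i) :
    sumOut D (fun y => ψ v ((C v).restrict y) * ∏ u ∈ (children par r v).attach,
        msg par r C ψ n u.1 ((C u.1 ∩ C (par u.1)).restrict y)) x =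
      sumOut (D ∪ (children par r v).biUnion fun u => scope par C u \ C v)
        (subtreeProd par C ψ v) x := by
  have hdisj : Disjoint D ((children par r v).biUnion fun u => scope par C u \ C v) :=
    disjoint_left.2 fun i hi hi' => by
      obtain ⟨u, _, hiu⟩ := mem_biUnion.1 hi'
      exact (mem_sdiff.1 hiu).2 (hD hi)
  rw [sumOut_union hdisj]
  congr 1
  funext y
  rw [← ht.mul_prod_sumOut_children hrip, prod_attach_msg_eq hmsg]

theorem msg_eq_sumOut (ht : IsRootedTree par r depth)
    (hrip : RunningIntersection (treeGraph par) C) (n : ℕ) (v : V) (hv : v ≠ r)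
    (hn : #(descendants par v) ≤ n) (x : ∀ i, X i) :
    msg par r C ψ n v ((C v ∩ C (par v)).restrict x) =
      sumOut (scope par C v \ C (par v)) (subtreeProd par C ψ v) x := by
  induction n generalizing v x with
  | zero => exact absurd hn (card_pos.2 ⟨v, mem_descendants_self v⟩).not_ge
  | succ n ih =>
    have hmsg (u) (hu : u ∈ children par r v) :=
      ih u (mem_children.1 hu).2 (Nat.le_of_lt_succ ((ht.card_descendants_lt hu).trans_le hn))
    rw [msg, sum_ite_restrict_eq_sumOut, ht.scope_sdiff_par hrip hv]
    exact ht.sumOut_mul_prod_msg hrip hmsg sdiff_subset x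

end IsRootedTree

end Messages

end JunctionTree

section JunctionTree

variable {V : Type} [Fintype V] [DecidableEq V]
variable {ι : Type} [Fintype ι] [DecidableEq ι]
variable {X : ι → Type} [∀ i, Fintype (X i)] [∀ i, DecidableEq (X i)] [∀ i, Nonempty (X i)]
variable {R : Type} [CommSemiring R]

open JunctionTree in
/-- Correctness of junction-tree message passing over an arbitrary commutative
semiring (the tree-like SPF construction underlying Corollary 1): if the rooted
tree `(T, C)` covers all the variables and satisfies the running intersection
property (for all vertices `u`, `w` and every `v` on the unique path between
them, `C u ∩ C w ⊆ C v`), then the bottom-up message passing value `Z` equals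
the sum over all full assignments of the product of all cluster functions. -/
theorem junction_tree_message_passing
    (par : V → V) (r : V) (depth : V → ℕ)
    (hroot : par r = r)
    (hdepth : ∀ v : V, v ≠ r → depth (par v) < depth v)
    (C : V → Finset ι)
    (hcover : Finset.univ.biUnion C = (Finset.univ : Finset ι))
    (hrip : ∀ u w : V, ∀ p : (treeGraph par).Walk u w, p.IsPath →
      ∀ v ∈ p.support, C u ∩ C w ⊆ C v)
    (ψ : (v : V) → ((i : ↥(C v)) → X i.1) → R) :
    rootSum par r C ψ =
      ∑ x : (i : ι) → X i, ∏ v : V, ψ v (fun i => x i.1) := by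
  have ht : IsRootedTree par r depth := ⟨hroot, hdepth⟩
  have hmsg (u) (hu : u ∈ children par r r) :=
    ht.msg_eq_sumOut (ψ := ψ) hrip _ u (mem_children.1 hu).2
      ((ht.card_descendants_lt hu).le.trans (card_le_univ _))
  let x : ∀ i, X i := fun _ => Classical.arbitrary _
  rw [rootSum, sum_eq_sumOut (C r) _ x]
  refine (ht.sumOut_mul_prod_msg hrip hmsg subset_rfl x).trans ?_
  rw [union_biUnion_scope_sdiff hroot, ht.scope_root hcover, sumOut_univ]
  simp only [subtreeProd, ht.descendants_root]
  rfl

end JunctionTree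
end

section
/- Let F be a decomposable NNF over n Boolean variables. Define sat(F) ∈ Bool recursively: sat of a literal leaf is true; sat of an And node is the conjunction of the sat-values of its children; sat of an Or node is the disjunction of the sat-values of its children. Then F is satisfiable, i.e., there exists x : Fin n → Bool with eval F x = true, if and only if sat(F) = true. -/
/-!
A satisfiable NNF stays satisfied under any change of the assignment outside its scope. Hence,
at an And node whose children have pairwise disjoint scopes, satisfying assignments of the
children can be glued into one, so satisfiability of a decomposable NNF propagates bottom-up
exactly as `sat` computes it.
-/

/-- A negation normal form circuit (NNF) over `n` Boolean variables: a leaf is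
a literal `(i, b)`; internal nodes are And or Or nodes with a finite list of
children. -/
inductive NNF (n : ℕ) where
  | lit : Fin n → Bool → NNF n
  | and : List (NNF n) → NNF n
  | or : List (NNF n) → NNF n

namespace NNF

variable {n : ℕ}

/-- Evaluation of an NNF at an assignment: a literal `(i, b)` evaluates to the
Boolean `x i = b`, an And node to the conjunction of its children's values, and
an Or node to the disjunction of its children's values. -/
def eval : NNF n → (Fin n → Bool) → Bool
  | .lit i b, x => x i == b
  | .and l, x => l.attach.all fun c => c.1.eval x
  | .or l, x => l.attach.any fun c => c.1.eval x
decreasing_by all_goals (simp_wf; have := List.sizeOf_lt_of_mem c.2; omega)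

/-- The scope of an NNF: the set of variable indices appearing in its literals. -/
def scope : NNF n → Finset (Fin n)
  | .lit i _ => {i}
  | .and l => (l.attach.map fun c => c.1.scope).foldr (· ∪ ·) ∅
  | .or l => (l.attach.map fun c => c.1.scope).foldr (· ∪ ·) ∅
decreasing_by all_goals (simp_wf; have := List.sizeOf_lt_of_mem c.2; omega)

/-- An NNF is decomposable iff the children of every And node have pairwise
disjoint scopes. -/
inductive Decomposable : NNF n → Prop
  | lit (i : Fin n) (b : Bool) : Decomposable (.lit i b)
  | and {l : List (NNF n)} :
      (∀ G ∈ l, Decomposable G) →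
      l.Pairwise (fun G H => Disjoint G.scope H.scope) →
      Decomposable (.and l)
  | or {l : List (NNF n)} :
      (∀ G ∈ l, Decomposable G) → Decomposable (.or l)

/-- The bottom-up pass `sat` (summation in the Boolean semiring
`(𝔹, ∨, ∧, 0, 1)`): `sat` of a literal leaf is `true`, of an And node the
conjunction of its children's values, of an Or node the disjunction of its
children's values. -/
def sat : NNF n → Bool
  | .lit _ _ => true
  | .and l => l.attach.all fun c => c.1.sat
  | .or l => l.attach.any fun c => c.1.sat
decreasing_by all_goals (simp_wf; have := List.sizeOf_lt_of_mem c.2; omega)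

end NNF

theorem Finset.mem_foldr_union {α : Type*} [DecidableEq α] {s : List (Finset α)} {a : α} :
    a ∈ s.foldr (· ∪ ·) ∅ ↔ ∃ t ∈ s, a ∈ t := by
  induction s <;> simp [*]

namespace NNF

variable {n : ℕ}

theorem induction_on {P : NNF n → Prop} (F : NNF n) (lit : ∀ i b, P (.lit i b))
    (and : ∀ l, (∀ G ∈ l, P G) → P (.and l)) (or : ∀ l, (∀ G ∈ l, P G) → P (.or l)) : P F :=
  match F with
  | .lit i b => lit i b
  | .and l => and l fun G _ => induction_on G lit and or
  | .or l => or l fun G _ => induction_on G lit and or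
decreasing_by all_goals (simp_wf; have := List.sizeOf_lt_of_mem ‹G ∈ l›; omega)

@[simp] theorem eval_lit (i : Fin n) (b : Bool) (x : Fin n → Bool) :
    (lit i b).eval x = (x i == b) := by simp [eval]

@[simp] theorem eval_and_eq_true {l : List (NNF n)} {x : Fin n → Bool} :
    (and l).eval x = true ↔ ∀ G ∈ l, G.eval x = true := by simp [eval]

@[simp] theorem eval_or_eq_true {l : List (NNF n)} {x : Fin n → Bool} :
    (or l).eval x = true ↔ ∃ G ∈ l, G.eval x = true := by simp [eval]

@[simp] theorem sat_lit (i : Fin n) (b : Bool) : (lit i b).sat = true := by simp [sat]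

@[simp] theorem sat_and_eq_true {l : List (NNF n)} :
    (and l).sat = true ↔ ∀ G ∈ l, G.sat = true := by simp [sat]

@[simp] theorem sat_or_eq_true {l : List (NNF n)} :
    (or l).sat = true ↔ ∃ G ∈ l, G.sat = true := by simp [sat]

theorem scope_subset_scope_and {l : List (NNF n)} {G : NNF n} (hG : G ∈ l) :
    G.scope ⊆ (and l).scope := fun i hi => by
  rw [scope, Finset.mem_foldr_union]
  simpa using ⟨G, hG, hi⟩

theorem scope_subset_scope_or {l : List (NNF n)} {G : NNF n} (hG : G ∈ l) :
    G.scope ⊆ (or l).scope := fun i hi => by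
  rw [scope, Finset.mem_foldr_union]
  simpa using ⟨G, hG, hi⟩

theorem eval_congr {F : NNF n} {x y : Fin n → Bool} (h : ∀ i ∈ F.scope, x i = y i) :
    F.eval x = F.eval y := by
  induction F using induction_on with
  | lit i b => simp [h i (by simp [scope])]
  | and l ih =>
    rw [Bool.eq_iff_iff, eval_and_eq_true, eval_and_eq_true]
    exact forall₂_congr fun G hG => by
      rw [ih G hG fun i hi => h i (scope_subset_scope_and hG hi)]
  | or l ih =>
    rw [Bool.eq_iff_iff, eval_or_eq_true, eval_or_eq_true]
    exact exists_congr fun G => and_congr_right fun hG => by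
      rw [ih G hG fun i hi => h i (scope_subset_scope_or hG hi)]

theorem sat_eq_true_of_eval_eq_true {F : NNF n} {x : Fin n → Bool} (h : F.eval x = true) :
    F.sat = true := by
  induction F using induction_on with
  | lit i b => simp
  | and l ih => exact sat_and_eq_true.2 fun G hG => ih G hG (eval_and_eq_true.1 h G hG)
  | or l ih =>
    obtain ⟨G, hG, hGx⟩ := eval_or_eq_true.1 h
    exact sat_or_eq_true.2 ⟨G, hG, ih G hG hGx⟩

theorem exists_forall_eval_eq_true_of_pairwise_disjoint {l : List (NNF n)}
    (hl : l.Pairwise fun G H => Disjoint G.scope H.scope) (hsat : ∀ G ∈ l, ∃ x, G.eval x = true) :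
    ∃ x, ∀ G ∈ l, G.eval x = true := by
  induction l with
  | nil => exact ⟨fun _ => false, by simp⟩
  | cons G l ih =>
    obtain ⟨hG, hl⟩ := List.pairwise_cons.1 hl
    obtain ⟨y, hy⟩ := ih hl fun H hH => hsat H (List.mem_cons_of_mem _ hH)
    obtain ⟨z, hz⟩ := hsat G List.mem_cons_self
    refine ⟨G.scope.piecewise z y, List.forall_mem_cons.2 ⟨?_, fun H hH => ?_⟩⟩
    · rwa [eval_congr fun i hi => G.scope.piecewise_eq_of_mem z y hi]
    · rw [eval_congr fun i hi =>
        G.scope.piecewise_eq_of_notMem z y (Finset.disjoint_right.1 (hG H hH) hi)]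
      exact hy H hH

theorem Decomposable.exists_eval_eq_true_of_sat_eq_true {F : NNF n} (hF : F.Decomposable)
    (h : F.sat = true) : ∃ x, F.eval x = true := by
  induction hF with
  | lit i b => exact ⟨fun _ => b, by simp⟩
  | @and l _ hl ih =>
    obtain ⟨x, hx⟩ := exists_forall_eval_eq_true_of_pairwise_disjoint hl fun G hG =>
      ih G hG (sat_and_eq_true.1 h G hG)
    exact ⟨x, eval_and_eq_true.2 hx⟩
  | @or l _ ih =>
    obtain ⟨G, hG, hGsat⟩ := sat_or_eq_true.1 h
    obtain ⟨x, hx⟩ := ih G hG hGsat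
    exact ⟨x, eval_or_eq_true.2 ⟨G, hG, hx⟩⟩

end NNF

/-- Corollary 3: a decomposable NNF is satisfiable if and only if the
linear-time bottom-up pass `sat` returns `true`. -/
theorem decomposable_nnf_satisfiable_iff_sat
    {n : ℕ} (F : NNF n) (hdec : F.Decomposable) :
    (∃ x : Fin n → Bool, F.eval x = true) ↔ F.sat = true :=
  ⟨fun ⟨_, hx⟩ => NNF.sat_eq_true_of_eval_eq_true hx, hdec.exists_eval_eq_true_of_sat_eq_true⟩
end

section
/- Let F be a decomposable OR-AND network over a finite index set ι with finite nonempty domains X i. Define sat(F) ∈ Bool recursively: sat of a constraint leaf (i, φ) is true iff there exists t ∈ X i with φ t = true; sat of an And node is the conjunction of the sat-values of its children; sat of an Or node is the disjunction of the sat-values of its children. Then there exists a full assignment x : ∀ i, X i with eval F x = true if and only if sat(F) = true. -/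
/-- An OR-AND network (OAN) over variables indexed by `ι` with finite domains
`X i`: a leaf is a unary constraint `(i, φ)` with `φ : X i → Bool`; internal
nodes are And or Or nodes with a finite list of children. -/
inductive OAN (ι : Type) (X : ι → Type) where
  | leaf : (i : ι) → (X i → Bool) → OAN ι X
  | and : List (OAN ι X) → OAN ι X
  | or : List (OAN ι X) → OAN ι X

namespace OAN

variable {ι : Type} [DecidableEq ι] {X : ι → Type} [∀ i, Fintype (X i)]

/-- Evaluation of an OAN at a full assignment: a leaf `(i, φ)` evaluates to
`φ (x i)`, an And node to the conjunction of its children's values, and an Or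
node to the disjunction of its children's values. -/
def eval : OAN ι X → ((i : ι) → X i) → Bool
  | .leaf i φ, x => φ (x i)
  | .and l, x => l.attach.all fun c => c.1.eval x
  | .or l, x => l.attach.any fun c => c.1.eval x
decreasing_by all_goals (simp_wf; have := List.sizeOf_lt_of_mem c.2; omega)

/-- The scope of an OAN: the set of variable indices appearing in its leaves. -/
def scope : OAN ι X → Finset ι
  | .leaf i _ => {i}
  | .and l => (l.attach.map fun c => c.1.scope).foldr (· ∪ ·) ∅
  | .or l => (l.attach.map fun c => c.1.scope).foldr (· ∪ ·) ∅
decreasing_by all_goals (simp_wf; have := List.sizeOf_lt_of_mem c.2; omega)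

/-- An OAN is decomposable iff the children of every And node have pairwise
disjoint scopes. -/
inductive Decomposable : OAN ι X → Prop
  | leaf (i : ι) (φ : X i → Bool) : Decomposable (.leaf i φ)
  | and {l : List (OAN ι X)} :
      (∀ G ∈ l, Decomposable G) →
      l.Pairwise (fun G H => Disjoint G.scope H.scope) →
      Decomposable (.and l)
  | or {l : List (OAN ι X)} :
      (∀ G ∈ l, Decomposable G) → Decomposable (.or l)

/-- The bottom-up pass `sat` (summation in the Boolean semiring): `sat` of a
constraint leaf `(i, φ)` is `true` iff some `t : X i` satisfies `φ t = true`,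
of an And node the conjunction of its children's values, of an Or node the
disjunction of its children's values. -/
def sat : OAN ι X → Bool
  | .leaf _ φ => decide (∃ t, φ t = true)
  | .and l => l.attach.all fun c => c.1.sat
  | .or l => l.attach.any fun c => c.1.sat
decreasing_by all_goals (simp_wf; have := List.sizeOf_lt_of_mem c.2; omega)

end OAN

/-!
Evaluation at `x` reads `x` only on the scope, and `sat` is evaluation in which every leaf may
choose its own value; hence a satisfying assignment makes `sat` true. Conversely, in a
decomposable network the children of an And node read pairwise disjoint sets of coordinates, so
satisfying assignments of the children can be glued along their scopes into a single one.
-/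

lemma List.subset_foldr_union_of_mem {α : Type*} [DecidableEq α] {L : List (Finset α)}
    {s : Finset α} (hs : s ∈ L) : s ⊆ L.foldr (· ∪ ·) ∅ := by
  induction L with
  | nil => simp at hs
  | cons t L ih =>
    rcases List.mem_cons.1 hs with rfl | hs
    · exact Finset.subset_union_left
    · exact (ih hs).trans Finset.subset_union_right

lemma exists_forall_of_dependsOn_of_pairwise_disjoint {ι β : Type*} {α : ι → Type*}
    [∀ i, Nonempty (α i)] {P : β → (Π i, α i) → Prop} {s : β → Set ι} {l : List β}
    (hP : ∀ b ∈ l, DependsOn (P b) (s b)) (hs : l.Pairwise fun b c => Disjoint (s b) (s c))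
    (hex : ∀ b ∈ l, ∃ x, P b x) : ∃ x, ∀ b ∈ l, P b x := by
  classical
  induction l with
  | nil => exact ⟨fun _ => Classical.arbitrary _, by simp⟩
  | cons b l ih =>
    obtain ⟨hb_disj, hs⟩ := List.pairwise_cons.1 hs
    obtain ⟨y, hy⟩ := ih (fun c hc => hP c (.tail _ hc)) hs (fun c hc => hex c (.tail _ hc))
    obtain ⟨xb, hxb⟩ := hex b List.mem_cons_self
    refine ⟨(s b).piecewise xb y, fun c hc => ?_⟩
    rcases List.mem_cons.1 hc with rfl | hc
    · rwa [hP c List.mem_cons_self fun i hi => Set.piecewise_eq_of_mem _ _ _ hi]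
    · rw [hP c (.tail _ hc) fun i hi => Set.piecewise_eq_of_notMem _ _ _
        (Set.disjoint_right.1 (hb_disj c hc) hi)]
      exact hy c hc

namespace OAN

variable {ι : Type} {X : ι → Type}

@[simp]
lemma eval_leaf (i : ι) (φ : X i → Bool) (x : (i : ι) → X i) : (leaf i φ).eval x = φ (x i) := by
  simp [eval]

@[simp]
lemma eval_and_eq_true {l : List (OAN ι X)} {x : (i : ι) → X i} :
    (and l).eval x = true ↔ ∀ G ∈ l, G.eval x = true := by
  simp [eval]

@[simp]
lemma eval_or_eq_true {l : List (OAN ι X)} {x : (i : ι) → X i} :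
    (or l).eval x = true ↔ ∃ G ∈ l, G.eval x = true := by
  simp [eval]

section Sat

variable [∀ i, Fintype (X i)]

@[simp]
lemma sat_leaf_eq_true (i : ι) (φ : X i → Bool) : (leaf i φ).sat = true ↔ ∃ t, φ t = true := by
  simp [sat]

@[simp]
lemma sat_and_eq_true {l : List (OAN ι X)} : (and l).sat = true ↔ ∀ G ∈ l, G.sat = true := by
  simp [sat]

@[simp]
lemma sat_or_eq_true {l : List (OAN ι X)} : (or l).sat = true ↔ ∃ G ∈ l, G.sat = true := by
  simp [sat]

theorem sat_eq_true_of_eval_eq_true : ∀ {F : OAN ι X} {x : (i : ι) → X i},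
    F.eval x = true → F.sat = true
  | leaf i φ, x, h => (sat_leaf_eq_true i φ).2 ⟨x i, by simpa using h⟩
  | and l, x, h => sat_and_eq_true.2 fun G hG =>
    sat_eq_true_of_eval_eq_true (eval_and_eq_true.1 h G hG)
  | or l, x, h => by
    obtain ⟨G, hG, hGx⟩ := eval_or_eq_true.1 h
    exact sat_or_eq_true.2 ⟨G, hG, sat_eq_true_of_eval_eq_true hGx⟩
decreasing_by all_goals (simp_wf; have := List.sizeOf_lt_of_mem hG; omega)

end Sat

variable [DecidableEq ι]

lemma subset_scope_and {G : OAN ι X} {l : List (OAN ι X)} (hG : G ∈ l) :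
    G.scope ⊆ (and l).scope := by
  rw [scope]
  exact List.subset_foldr_union_of_mem (List.mem_map.2 ⟨⟨G, hG⟩, List.mem_attach _ _, rfl⟩)

lemma subset_scope_or {G : OAN ι X} {l : List (OAN ι X)} (hG : G ∈ l) :
    G.scope ⊆ (or l).scope := by
  rw [scope]
  exact List.subset_foldr_union_of_mem (List.mem_map.2 ⟨⟨G, hG⟩, List.mem_attach _ _, rfl⟩)

theorem dependsOn_eval_scope : ∀ F : OAN ι X, DependsOn F.eval F.scope
  | leaf i φ, x, y, hxy => by simp [hxy i (by simp [scope])]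
  | and l, x, y, hxy => by
    rw [eval, eval]
    congr 1
    funext ⟨G, hG⟩
    exact dependsOn_eval_scope G fun i hi => hxy i (subset_scope_and hG hi)
  | or l, x, y, hxy => by
    rw [eval, eval]
    congr 1
    funext ⟨G, hG⟩
    exact dependsOn_eval_scope G fun i hi => hxy i (subset_scope_or hG hi)
decreasing_by all_goals (simp_wf; have := List.sizeOf_lt_of_mem hG; omega)

theorem Decomposable.exists_eval_eq_true_of_sat [∀ i, Fintype (X i)] [∀ i, Nonempty (X i)]
    {F : OAN ι X} (hF : F.Decomposable) (hsat : F.sat = true) : ∃ x, F.eval x = true := by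
  induction hF with
  | leaf i φ =>
    obtain ⟨t, ht⟩ := (sat_leaf_eq_true i φ).1 hsat
    exact ⟨Function.update (fun _ => Classical.arbitrary _) i t, by simpa using ht⟩
  | @and l _ hdisj ih =>
    simp only [eval_and_eq_true]
    exact exists_forall_of_dependsOn_of_pairwise_disjoint
      (fun G _ _ _ h => congrArg (· = true) (dependsOn_eval_scope G h))
      (hdisj.imp Finset.disjoint_coe.2)
      (fun G hG => ih G hG (sat_and_eq_true.1 hsat G hG))
  | @or l _ ih =>
    obtain ⟨G, hG, hGsat⟩ := sat_or_eq_true.1 hsat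
    obtain ⟨x, hx⟩ := ih G hG hGsat
    exact ⟨x, eval_or_eq_true.2 ⟨G, hG, hx⟩⟩

end OAN

theorem decomposable_csp_solvable_iff_sat_general
    {ι : Type} [DecidableEq ι] {X : ι → Type}
    [∀ i, Fintype (X i)] [∀ i, Nonempty (X i)]
    (F : OAN ι X) (hdec : F.Decomposable) :
    (∃ x : (i : ι) → X i, F.eval x = true) ↔ F.sat = true :=
  ⟨fun ⟨_, hx⟩ => OAN.sat_eq_true_of_eval_eq_true hx, hdec.exists_eval_eq_true_of_sat⟩

/-- Corollary 4 (every decomposable CSP can be solved in time linear in its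
size): a decomposable OR-AND network has a satisfying full assignment if and
only if the linear-time bottom-up pass `sat` returns `true`. -/
theorem decomposable_csp_solvable_iff_sat
    {ι : Type} [Fintype ι] [DecidableEq ι] {X : ι → Type}
    [∀ i, Fintype (X i)] [∀ i, Nonempty (X i)]
    (F : OAN ι X) (hdec : F.Decomposable) :
    (∃ x : (i : ι) → X i, F.eval x = true) ↔ F.sat = true :=
  decomposable_csp_solvable_iff_sat_general F hdec
end

section
/- Let ι be a finite index set with nonempty (not necessarily finite) domains X i, and let F be a decomposable min-sum expression in these variables in which every leaf function is bounded below. Define M(F) ∈ ℝ recursively: M of a leaf (i, φ) is ⨅_{t ∈ X i} φ t; M of a Plus node is the sum of the M-values of its children; M of a Min node is the minimum of the M-values of its children. Then ⨅_{x : ∀ i, X i} eval F x = M(F). -/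
/-!
Every evaluation is bounded below by `M`, node by node. Conversely, `M` is approached: at a Min node
by following the child attaining the minimum, and at a Plus node by gluing near-optimal assignments
of the children, which is possible because decomposability makes their scopes disjoint and an
expression only reads the variables in its scope.
-/

/-- A min-sum expression (MSF): a sum-product expression on the min-sum
semiring `(ℝ ∪ {∞}, min, +, ∞, 0)` in variables indexed by `ι` with domains
`X i`.  A leaf is a pair `(i, φ)` with `φ : X i → ℝ`; internal nodes are Min or
Plus nodes with a nonempty finite list of children (encoded as a head child
together with the list of remaining children). -/
inductive MSF (ι : Type) (X : ι → Type) where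
  | leaf : (i : ι) → (X i → ℝ) → MSF ι X
  | mins : MSF ι X → List (MSF ι X) → MSF ι X
  | plus : MSF ι X → List (MSF ι X) → MSF ι X

namespace MSF

variable {ι : Type} [DecidableEq ι] {X : ι → Type}

/-- Evaluation of an MSF at a full assignment: a leaf `(i, φ)` evaluates to
`φ (x i)`, a Min node to the minimum of its children's values, and a Plus node
to the sum of its children's values. -/
def eval : MSF ι X → ((i : ι) → X i) → ℝ
  | .leaf i φ, x => φ (x i)
  | .mins h t, x => (t.attach.map fun c => c.1.eval x).foldr min (h.eval x)
  | .plus h t, x => h.eval x + (t.attach.map fun c => c.1.eval x).sum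
decreasing_by all_goals first
  | (simp_wf; have := List.sizeOf_lt_of_mem c.2; omega)
  | (simp_wf; omega)

/-- The scope of an MSF: the set of variable indices appearing in its leaves. -/
def scope : MSF ι X → Finset ι
  | .leaf i _ => {i}
  | .mins h t => (t.attach.map fun c => c.1.scope).foldr (· ∪ ·) h.scope
  | .plus h t => (t.attach.map fun c => c.1.scope).foldr (· ∪ ·) h.scope
decreasing_by all_goals first
  | (simp_wf; have := List.sizeOf_lt_of_mem c.2; omega)
  | (simp_wf; omega)

/-- An MSF is decomposable iff the children of every Plus node have pairwise
disjoint scopes. -/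
inductive Decomposable : MSF ι X → Prop
  | leaf (i : ι) (φ : X i → ℝ) : Decomposable (.leaf i φ)
  | mins {h : MSF ι X} {t : List (MSF ι X)} :
      Decomposable h → (∀ G ∈ t, Decomposable G) → Decomposable (.mins h t)
  | plus {h : MSF ι X} {t : List (MSF ι X)} :
      Decomposable h → (∀ G ∈ t, Decomposable G) →
      (h :: t).Pairwise (fun G H => Disjoint G.scope H.scope) →
      Decomposable (.plus h t)

/-- Every leaf function of the MSF is bounded below. -/
inductive BddLeaves : MSF ι X → Prop
  | leaf (i : ι) (φ : X i → ℝ) : BddBelow (Set.range φ) → BddLeaves (.leaf i φ)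
  | mins {h : MSF ι X} {t : List (MSF ι X)} :
      BddLeaves h → (∀ G ∈ t, BddLeaves G) → BddLeaves (.mins h t)
  | plus {h : MSF ι X} {t : List (MSF ι X)} :
      BddLeaves h → (∀ G ∈ t, BddLeaves G) → BddLeaves (.plus h t)

/-- The bottom-up minimization pass `M`: `M` of a leaf `(i, φ)` is
`⨅ t : X i, φ t`, of a Plus node the sum of its children's values, of a Min
node the minimum of its children's values. -/
noncomputable def M : MSF ι X → ℝ
  | .leaf _ φ => ⨅ t, φ t
  | .mins h t => (t.attach.map fun c => c.1.M).foldr min h.M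
  | .plus h t => h.M + (t.attach.map fun c => c.1.M).sum
decreasing_by all_goals first
  | (simp_wf; have := List.sizeOf_lt_of_mem c.2; omega)
  | (simp_wf; omega)

end MSF

namespace List

variable {α β : Type*} [LinearOrder β]

theorem foldr_min_map_le (f : α → β) {b a : α} {l : List α} (ha : a ∈ b :: l) :
    (l.map f).foldr min (f b) ≤ f a := by
  induction l with
  | nil => simp_all
  | cons c l ih =>
    rcases mem_cons.1 ha with rfl | ha
    · exact min_le_right _ _ |>.trans (ih mem_cons_self)
    · rcases mem_cons.1 ha with rfl | ha
      · exact min_le_left _ _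
      · exact min_le_right _ _ |>.trans (ih (mem_cons_of_mem _ ha))

theorem exists_mem_foldr_min_map_eq (f : α → β) (b : α) (l : List α) :
    ∃ a ∈ b :: l, (l.map f).foldr min (f b) = f a := by
  induction l with
  | nil => exact ⟨b, mem_cons_self, rfl⟩
  | cons c l ih =>
    obtain ⟨a, ha, hfa⟩ := ih
    rcases le_total (f c) (f a) with hca | hac
    · exact ⟨c, by simp, by simp [hfa, hca]⟩
    · exact ⟨a, by rcases mem_cons.1 ha with rfl | ha <;> simp [*], by simp [hfa, hac]⟩

theorem mem_foldr_union_map {γ : Type*} [DecidableEq γ] (f : α → Finset γ) (b : α)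
    (l : List α) (i : γ) :
    i ∈ (l.map f).foldr (· ∪ ·) (f b) ↔ ∃ a ∈ b :: l, i ∈ f a := by
  induction l with
  | nil => simp
  | cons c l ih => simp [ih, or_left_comm]

end List

namespace MSF

section

variable {ι : Type} {X : ι → Type}

theorem induction_on {motive : MSF ι X → Prop} (F : MSF ι X)
    (leaf : ∀ i φ, motive (.leaf i φ))
    (mins : ∀ h t, (∀ c ∈ h :: t, motive c) → motive (.mins h t))
    (plus : ∀ h t, (∀ c ∈ h :: t, motive c) → motive (.plus h t)) :
    motive F :=
  match F with
  | .leaf i φ => leaf i φ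
  | .mins h t => mins h t fun c _ => induction_on c leaf mins plus
  | .plus h t => plus h t fun c _ => induction_on c leaf mins plus
termination_by sizeOf F
decreasing_by all_goals
  simp_wf
  rcases List.mem_cons.1 ‹c ∈ h :: t› with rfl | hc
  · omega
  · have := List.sizeOf_lt_of_mem hc; omega

@[simp]
theorem eval_leaf (i : ι) (φ : X i → ℝ) (x : (i : ι) → X i) :
    (leaf i φ).eval x = φ (x i) := by
  rw [eval]

@[simp]
theorem eval_mins (h : MSF ι X) (t : List (MSF ι X)) (x : (i : ι) → X i) :
    (mins h t).eval x = (t.map (eval · x)).foldr min (h.eval x) := by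
  rw [eval, List.attach_map_val (f := (eval · x))]

@[simp]
theorem eval_plus (h : MSF ι X) (t : List (MSF ι X)) (x : (i : ι) → X i) :
    (plus h t).eval x = h.eval x + (t.map (eval · x)).sum := by
  rw [eval, List.attach_map_val (f := (eval · x))]

@[simp]
theorem M_leaf (i : ι) (φ : X i → ℝ) : (leaf i φ).M = ⨅ t, φ t := by
  rw [M]

@[simp]
theorem M_mins (h : MSF ι X) (t : List (MSF ι X)) : (mins h t).M = (t.map M).foldr min h.M := by
  rw [M, List.attach_map_val (f := M)]

@[simp]
theorem M_plus (h : MSF ι X) (t : List (MSF ι X)) : (plus h t).M = h.M + (t.map M).sum := by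
  rw [M, List.attach_map_val (f := M)]

theorem M_le_eval {F : MSF ι X} (hF : F.BddLeaves) (x : (i : ι) → X i) : F.M ≤ F.eval x := by
  induction F using induction_on with
  | leaf i φ =>
    obtain ⟨_, _, hφ⟩ := hF
    rw [M_leaf, eval_leaf]
    exact ciInf_le hφ (x i)
  | mins h t ih =>
    obtain _ | ⟨hh, ht⟩ := hF
    obtain ⟨c, hc, hmin⟩ := List.exists_mem_foldr_min_map_eq (eval · x) h t
    rw [eval_mins, hmin, M_mins]
    exact (List.foldr_min_map_le M hc).trans (ih c hc (List.forall_mem_cons.2 ⟨hh, ht⟩ c hc))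
  | plus h t ih =>
    obtain _ | _ | ⟨hh, ht⟩ := hF
    rw [eval_plus, M_plus]
    exact add_le_add (ih h List.mem_cons_self hh)
      (List.sum_le_sum fun c hc => ih c (List.mem_cons_of_mem _ hc) (ht c hc))

end

variable {ι : Type} [DecidableEq ι] {X : ι → Type}

theorem mem_scope_mins {h : MSF ι X} {t : List (MSF ι X)} {i : ι} :
    i ∈ (mins h t).scope ↔ ∃ c ∈ h :: t, i ∈ c.scope := by
  rw [scope, List.attach_map_val (f := scope), List.mem_foldr_union_map]

theorem mem_scope_plus {h : MSF ι X} {t : List (MSF ι X)} {i : ι} :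
    i ∈ (plus h t).scope ↔ ∃ c ∈ h :: t, i ∈ c.scope := by
  rw [scope, List.attach_map_val (f := scope), List.mem_foldr_union_map]

theorem eval_congr {F : MSF ι X} {x y : (i : ι) → X i} (hxy : ∀ i ∈ F.scope, x i = y i) :
    F.eval x = F.eval y := by
  induction F using induction_on with
  | leaf i φ => simp [hxy i (by simp [scope])]
  | mins h t ih =>
    have hc := List.forall_mem_cons.1 fun c hc =>
      ih c hc fun i hi => hxy i (mem_scope_mins.2 ⟨c, hc, hi⟩)
    rw [eval_mins, eval_mins, hc.1, List.map_congr_left hc.2]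
  | plus h t ih =>
    have hc := List.forall_mem_cons.1 fun c hc =>
      ih c hc fun i hi => hxy i (mem_scope_plus.2 ⟨c, hc, hi⟩)
    rw [eval_plus, eval_plus, hc.1, List.map_congr_left hc.2]

variable [∀ i, Nonempty (X i)]

theorem exists_sum_eval_lt_of_pairwise_disjoint {l : List (MSF ι X)}
    (hl : l.Pairwise fun G H => Disjoint G.scope H.scope)
    (happrox : ∀ c ∈ l, ∀ ε > 0, ∃ x, c.eval x < c.M + ε) {ε : ℝ} (hε : 0 < ε) :
    ∃ x : (i : ι) → X i, (l.map (eval · x)).sum < (l.map M).sum + ε := by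
  induction l generalizing ε with
  | nil => exact ⟨fun _ => Classical.arbitrary _, by simpa⟩
  | cons c l ih =>
    obtain ⟨hcl, hl⟩ := List.pairwise_cons.1 hl
    obtain ⟨x₁, hx₁⟩ := happrox c List.mem_cons_self (ε / 2) (half_pos hε)
    obtain ⟨x₂, hx₂⟩ :=
      ih hl (fun d hd => happrox d (List.mem_cons_of_mem _ hd)) (half_pos hε)
    let x := c.scope.piecewise x₁ x₂
    have hc : c.eval x = c.eval x₁ :=
      eval_congr fun i hi => c.scope.piecewise_eq_of_mem _ _ hi
    have hl' : l.map (eval · x) = l.map (eval · x₂) := List.map_congr_left fun d hd =>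
      eval_congr fun i hi =>
        c.scope.piecewise_eq_of_notMem _ _ (Finset.disjoint_right.1 (hcl d hd) hi)
    refine ⟨x, ?_⟩
    simp only [List.map_cons, List.sum_cons, hc, hl']
    linarith

theorem exists_eval_lt_M_add {F : MSF ι X} (hdec : F.Decomposable) (hbdd : F.BddLeaves) {ε : ℝ}
    (hε : 0 < ε) : ∃ x, F.eval x < F.M + ε := by
  induction F using induction_on generalizing ε with
  | leaf i φ =>
    obtain ⟨t, ht⟩ := exists_lt_of_ciInf_lt (lt_add_of_pos_right (⨅ t, φ t) hε)
    exact ⟨Function.update (fun _ => Classical.arbitrary _) i t, by simpa using ht⟩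
  | mins h t ih =>
    obtain _ | ⟨hdh, hdt⟩ := hdec
    obtain _ | ⟨hbh, hbt⟩ := hbdd
    obtain ⟨c, hc, hmin⟩ := List.exists_mem_foldr_min_map_eq M h t
    obtain ⟨x, hx⟩ := ih c hc (List.forall_mem_cons.2 ⟨hdh, hdt⟩ c hc)
      (List.forall_mem_cons.2 ⟨hbh, hbt⟩ c hc) hε
    refine ⟨x, ?_⟩
    rw [eval_mins, M_mins, hmin]
    exact (List.foldr_min_map_le (eval · x) hc).trans_lt hx
  | plus h t ih =>
    obtain _ | _ | ⟨hdh, hdt, hpw⟩ := hdec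
    obtain _ | _ | ⟨hbh, hbt⟩ := hbdd
    have hd := List.forall_mem_cons.2 ⟨hdh, hdt⟩
    have hb := List.forall_mem_cons.2 ⟨hbh, hbt⟩
    obtain ⟨x, hx⟩ := exists_sum_eval_lt_of_pairwise_disjoint hpw
      (fun c hc _ hε => ih c hc (hd c hc) (hb c hc) hε) hε
    exact ⟨x, by simpa [add_assoc] using hx⟩

end MSF

theorem global_min_decomposable_msf_general
    {ι : Type} [DecidableEq ι] {X : ι → Type} [∀ i, Nonempty (X i)]
    (F : MSF ι X) (hdec : F.Decomposable) (hbdd : F.BddLeaves) :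
    ⨅ x : (i : ι) → X i, F.eval x = F.M := by
  refine ciInf_eq_of_forall_ge_of_forall_gt_exists_lt (MSF.M_le_eval hbdd) fun w hw => ?_
  obtain ⟨x, hx⟩ := MSF.exists_eval_lt_M_add hdec hbdd (sub_pos.2 hw)
  exact ⟨x, by linarith⟩

/-- Corollary 7 (the global minimum of a decomposable MSF can be found in time
linear in its size): for a decomposable min-sum expression with leaf functions
bounded below, the infimum of its evaluation over all full assignments equals
the linear-time bottom-up value `M(F)`. -/
theorem global_min_decomposable_msf
    {ι : Type} [Fintype ι] [DecidableEq ι] {X : ι → Type} [∀ i, Nonempty (X i)]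
    (F : MSF ι X) (hdec : F.Decomposable) (hbdd : F.BddLeaves) :
    ⨅ x : (i : ι) → X i, F.eval x = F.M :=
  global_min_decomposable_msf_general F hdec hbdd
end
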